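/- Non-degeneracy of the asymptotic variance for the Van Valen MCV (Lemma 2, variant VV): Under the stated assumptions with Σ ≠ 0 and with no coordinate of X_1 conditionally two-point distributed, the asymptotic variance σ²_{C^VV} = (1/4)·(C^VV)⁻²·A_VV(μ, Σ)·Σ_X̃·A_VV(μ, Σ)ᵀ is strictly positive: σ²_{C^VV} > 0. -/

import Mathlib

open MeasureTheory ProbabilityTheory Filter Matrix Topology BigOperators

noncomputable section

/-- The matrix `D̃(x) ∈ ℝ^{d²×d}`; the row index `(a, r)` plays the role of the
linear index `(a−1)d + r`. -/
def Dtilde {d : ℕ} (x : Fin d → ℝ) : Matrix (Fin d × Fin d) (Fin d) ℝ :=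
  fun p s =>
    (if s = p.1 ∧ p.1 ≠ p.2 then -(x p.2) else 0)
      + (if s = p.2 ∧ p.2 = p.1 then -(2 * x s) else 0)
      + (if p.2 = s ∧ s ≠ p.1 then -(x p.1) else 0)

/-- The vectorization `vec(I_d)` of the identity matrix. -/
def vecId (d : ℕ) : Fin d × Fin d → ℝ := fun p => if p.2 = p.1 then 1 else 0

/-- The row vector `A_VV(m, S) ∈ ℝ^{1×(d+d²)}`. -/
def Avv {d : ℕ} (m : Fin d → ℝ) (S : Matrix (Fin d) (Fin d) ℝ) :
    (Fin d ⊕ Fin d × Fin d) → ℝ :=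
  Sum.elim
    (fun s => -2 * S.trace * m s / (m ⬝ᵥ m) ^ 2
      + (m ⬝ᵥ m)⁻¹ * Matrix.vecMul (vecId d) (Dtilde m) s)
    (fun p => (m ⬝ᵥ m)⁻¹ * vecId d p)

/-- The Van Valen multivariate coefficient of variation `C^VV = sqrt(tr S/(mᵀm))`. -/
def CVVof {d : ℕ} (m : Fin d → ℝ) (S : Matrix (Fin d) (Fin d) ℝ) : ℝ :=
  Real.sqrt (S.trace / (m ⬝ᵥ m))

/-- The asymptotic variance `σ²_{C^VV} = (1/4)(C^VV)⁻² A_VV(μ,Σ) Σ_X̃ A_VV(μ,Σ)ᵀ`. -/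
def sigma2VV {d : ℕ} (m : Fin d → ℝ) (S : Matrix (Fin d) (Fin d) ℝ)
    (Ψ3 : Matrix (Fin d × Fin d) (Fin d) ℝ)
    (Ψ4 : Matrix (Fin d × Fin d) (Fin d × Fin d) ℝ) : ℝ :=
  (1 / 4) * ((CVVof m S) ^ 2)⁻¹
    * (Avv m S ⬝ᵥ (Matrix.fromBlocks S Ψ3ᵀ Ψ3 Ψ4).mulVec (Avv m S))

/-!
`Σ_X̃` is the covariance matrix of `X̃ = (X, vec(X Xᵀ))`, so `A_VV Σ_X̃ A_VVᵀ` is the variance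
of `A_VV · X̃ = XᵀX / μᵀμ + (a linear form in X)`. If that variance vanished, this
quadratic polynomial in `X` would be almost surely constant. Solving it for one coordinate
`X_m`, which enters with leading coefficient `1 / μᵀμ ≠ 0`, shows that `X_m` is almost surely
one of two roots whose coefficients only involve the other coordinates: `X_m` would be
conditionally two-point distributed. The same hypothesis gives `Var X_m > 0`, hence `tr Σ > 0` and `C^VV ≠ 0`.
-/

section

variable {Ω ι : Type*} [MeasurableSpace Ω] {P : Measure Ω}

def IsCondTwoPoint (P : Measure Ω) (X : Ω → ι → ℝ) (m : ι) : Prop :=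
  ∃ f g : (ι → ℝ) → ℝ, Measurable f ∧ Measurable g
    ∧ (∀ x y : ι → ℝ, (∀ s, s ≠ m → x s = y s) → f x = f y)
    ∧ (∀ x y : ι → ℝ, (∀ s, s ≠ m → x s = y s) → g x = g y)
    ∧ P {ω | X ω m = f (X ω) ∨ X ω m = g (X ω)} = 1

/-- The paper's `X̃ = (X, vec(X Xᵀ))`. -/
def augment (x : ι → ℝ) : ι ⊕ ι × ι → ℝ :=
  Sum.elim x fun p => x p.1 * x p.2

theorem Fintype.sum_eq_add_sum_update_zero [Fintype ι] [DecidableEq ι] {β M : Type*} [Zero β]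
    [AddCommMonoid M] (φ : ι → β → M) (hφ : ∀ i, φ i 0 = 0) (x : ι → β) (m : ι) :
    ∑ i, φ i (x i) = φ m (x m) + ∑ i, φ i (Function.update x m 0 i) := by
  simp_rw [Function.apply_update (fun i => φ i) x m 0, hφ,
    Finset.sum_update_of_mem (Finset.mem_univ m), zero_add]
  exact Fintype.sum_eq_add_sum_compl m _

section CondTwoPoint

variable [IsProbabilityMeasure P] [DecidableEq ι] {X : Ω → ι → ℝ} {m : ι}

theorem isCondTwoPoint_of_ae_eq_or_eq {F G : (ι → ℝ) → ℝ} (hF : Measurable F)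
    (hG : Measurable G)
    (h : ∀ᵐ ω ∂P, X ω m = F (Function.update (X ω) m 0)
      ∨ X ω m = G (Function.update (X ω) m 0)) :
    IsCondTwoPoint P X m := by
  have hupdate : ∀ x y : ι → ℝ, (∀ s, s ≠ m → x s = y s) →
      Function.update x m 0 = Function.update y m 0 := fun x y hxy => by
    ext s
    rcases eq_or_ne s m with rfl | hs
    · simp
    · simp [hs, hxy s hs]
  refine ⟨fun x => F (Function.update x m 0), fun x => G (Function.update x m 0),
    hF.comp (by fun_prop), hG.comp (by fun_prop), fun x y hxy => congrArg F (hupdate x y hxy),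
    fun x y hxy => congrArg G (hupdate x y hxy), ?_⟩
  exact (measure_congr (ae_eq_univ.2 (ae_iff.1 h))).trans measure_univ

theorem isCondTwoPoint_of_ae_quadratic_eq_zero {a b : ℝ} (ha : a ≠ 0) {c : (ι → ℝ) → ℝ}
    (hc : Measurable c)
    (h : ∀ᵐ ω ∂P, a * (X ω m * X ω m) + b * X ω m + c (Function.update (X ω) m 0) = 0) :
    IsCondTwoPoint P X m := by
  refine isCondTwoPoint_of_ae_eq_or_eq (F := fun x => (-b + √(discrim a b (c x))) / (2 * a))
    (G := fun x => (-b - √(discrim a b (c x))) / (2 * a)) (by unfold discrim; fun_prop)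
    (by unfold discrim; fun_prop) ?_
  filter_upwards [h] with ω hω
  have hdiscrim := discrim_eq_sq_of_quadratic_eq_zero hω
  exact (quadratic_eq_zero_iff ha
    (Real.mul_self_sqrt (hdiscrim ▸ sq_nonneg _)).symm _).1 hω

theorem variance_pos_of_not_isCondTwoPoint (hX : ¬ IsCondTwoPoint P X m)
    (hXm : MemLp (fun ω => X ω m) 2 P) :
    0 < Var[fun ω => X ω m; P] := by
  refine (variance_nonneg _ _).lt_of_ne fun h0 => hX ?_
  refine isCondTwoPoint_of_ae_eq_or_eq (F := fun _ => P[fun ω => X ω m])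
    (G := fun _ => P[fun ω => X ω m]) measurable_const measurable_const ?_
  filter_upwards [ae_eq_integral_of_variance_eq_zero hXm h0.symm] with ω hω
  exact Or.inl hω

theorem variance_quadratic_pos_of_not_isCondTwoPoint [Fintype ι]
    (hX : ¬ IsCondTwoPoint P X m) {a : ℝ} (ha : a ≠ 0) (b : ι → ℝ)
    (hY : MemLp (fun ω => ∑ i, (a * X ω i ^ 2 + b i * X ω i)) 2 P) :
    0 < Var[fun ω => ∑ i, (a * X ω i ^ 2 + b i * X ω i); P] := by
  refine (variance_nonneg _ _).lt_of_ne fun h0 => hX ?_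
  refine isCondTwoPoint_of_ae_quadratic_eq_zero ha (b := b m)
    (c := fun x => ∑ i, (a * x i ^ 2 + b i * x i)
      - P[fun ω => ∑ i, (a * X ω i ^ 2 + b i * X ω i)]) (by fun_prop) ?_
  filter_upwards [ae_eq_integral_of_variance_eq_zero hY h0.symm] with ω hω
  have hsplit := Fintype.sum_eq_add_sum_update_zero (fun i t => a * t ^ 2 + b i * t)
    (fun i => by ring) (X ω) m
  linear_combination hsplit.symm.trans hω

end CondTwoPoint

section Moments

variable [Fintype ι]

theorem dotProduct_mulVec_eq_variance [IsFiniteMeasure P] {W : Ω → ι → ℝ}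
    (hW : ∀ i, MemLp (fun ω => W ω i) 2 P) {M : Matrix ι ι ℝ}
    (hM : ∀ i j, M i j = cov[fun ω => W ω i, fun ω => W ω j; P]) (v : ι → ℝ) :
    v ⬝ᵥ M *ᵥ v = Var[fun ω => v ⬝ᵥ W ω; P] := by
  simp only [dotProduct]
  rw [variance_fun_sum fun i => (hW i).const_mul (v i)]
  simp only [mulVec, dotProduct, hM, covariance_const_mul_left, covariance_const_mul_right,
    Finset.mul_sum]
  exact Finset.sum_congr rfl fun i _ => Finset.sum_congr rfl fun j _ => by ring

theorem memLp_augment [IsFiniteMeasure P] {X : Ω → ι → ℝ} (hX : AEStronglyMeasurable X P)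
    (h4 : Integrable (fun ω => ‖X ω‖ ^ 4) P) (i : ι ⊕ ι × ι) :
    MemLp (fun ω => augment (X ω) i) 2 P := by
  have hX4 : MemLp X 4 P := by
    rw [← integrable_norm_rpow_iff hX (by norm_num) (by norm_num)]
    simpa using h4
  have : ENNReal.HolderTriple 4 4 2 := ⟨by
    rw [← two_mul, show (4 : ENNReal) = 2 * 2 by norm_num, ENNReal.mul_inv (by simp) (by simp),
      ← mul_assoc, ENNReal.mul_inv_cancel (by simp) (by simp), one_mul]⟩
  rcases i with a | ⟨a, r⟩
  · exact (hX4.eval a).mono_exponent (by norm_num)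
  · exact (hX4.eval r).mul' (hX4.eval a)

end Moments

theorem fromBlocks_apply_eq_covariance [IsProbabilityMeasure P] {X : Ω → ι → ℝ}
    (hV : ∀ i, MemLp (fun ω => augment (X ω) i) 2 P)
    {μ : ι → ℝ} (hμ : ∀ a, μ a = ∫ ω, X ω a ∂P)
    {S : Matrix ι ι ℝ} (hS : ∀ a b, S a b = (∫ ω, X ω a * X ω b ∂P) - μ a * μ b)
    {Ψ3 : Matrix (ι × ι) ι ℝ}
    (hΨ3 : ∀ a r s, Ψ3 (a, r) s
      = (∫ ω, X ω a * X ω r * X ω s ∂P) - (∫ ω, X ω a * X ω r ∂P) * (∫ ω, X ω s ∂P))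
    {Ψ4 : Matrix (ι × ι) (ι × ι) ℝ}
    (hΨ4 : ∀ a r b s, Ψ4 (a, r) (b, s)
      = (∫ ω, X ω a * X ω r * X ω b * X ω s ∂P)
        - (∫ ω, X ω a * X ω r ∂P) * (∫ ω, X ω b * X ω s ∂P))
    (i j : ι ⊕ ι × ι) :
    fromBlocks S Ψ3ᵀ Ψ3 Ψ4 i j
      = cov[fun ω => augment (X ω) i, fun ω => augment (X ω) j; P] := by
  rw [covariance_eq_sub (hV i) (hV j)]
  rcases i with a | ⟨a, r⟩ <;> rcases j with b | ⟨b, s⟩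
  · simp [augment, hS, hμ]
  · simp only [fromBlocks_apply₁₂, transpose_apply, hΨ3, augment, Sum.elim_inl, Sum.elim_inr,
      Pi.mul_apply]
    rw [mul_comm (∫ ω, X ω b * X ω s ∂P)]
    simp_rw [mul_comm (X _ a)]
  · simp [augment, hΨ3]
  · simp [augment, hΨ4, mul_assoc]

end

theorem Avv_dotProduct_augment {d : ℕ} (m : Fin d → ℝ) (S : Matrix (Fin d) (Fin d) ℝ)
    (x : Fin d → ℝ) :
    Avv m S ⬝ᵥ augment x = ∑ a, ((m ⬝ᵥ m)⁻¹ * x a ^ 2 + Avv m S (Sum.inl a) * x a) := by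
  rw [dotProduct, Fintype.sum_sum_type, Fintype.sum_prod_type, add_comm,
    ← Finset.sum_add_distrib]
  refine Finset.sum_congr rfl fun a _ => ?_
  simp [Avv, augment, vecId, sq]

theorem sigma2VV_pos
    (d : ℕ)
    {Ω : Type} [MeasurableSpace Ω] (P : Measure Ω) [IsProbabilityMeasure P]
    (X : Ω → Fin d → ℝ) (hmeas : Measurable X)
    (hmom : Integrable (fun ω => ‖X ω‖ ^ 4) P)
    (μ : Fin d → ℝ) (hμdef : ∀ a, μ a = ∫ ω, X ω a ∂P) (hμ : μ ≠ 0)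
    (SigM : Matrix (Fin d) (Fin d) ℝ)
    (hSig : ∀ a b, SigM a b = (∫ ω, X ω a * X ω b ∂P) - μ a * μ b)
    (Ψ3 : Matrix (Fin d × Fin d) (Fin d) ℝ)
    (hΨ3 : ∀ a r s, Ψ3 (a, r) s
      = (∫ ω, X ω a * X ω r * X ω s ∂P)
        - (∫ ω, X ω a * X ω r ∂P) * (∫ ω, X ω s ∂P))
    (Ψ4 : Matrix (Fin d × Fin d) (Fin d × Fin d) ℝ)
    (hΨ4 : ∀ a r b s, Ψ4 (a, r) (b, s)
      = (∫ ω, X ω a * X ω r * X ω b * X ω s ∂P)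
        - (∫ ω, X ω a * X ω r ∂P) * (∫ ω, X ω b * X ω s ∂P))
    (htp : ∀ m : Fin d, ¬ ∃ f g : (Fin d → ℝ) → ℝ, Measurable f ∧ Measurable g
      ∧ (∀ x y : Fin d → ℝ, (∀ s, s ≠ m → x s = y s) → f x = f y)
      ∧ (∀ x y : Fin d → ℝ, (∀ s, s ≠ m → x s = y s) → g x = g y)
      ∧ P {ω | X ω m = f (X ω) ∨ X ω m = g (X ω)} = 1) :
    0 < sigma2VV μ SigM Ψ3 Ψ4 := by
  obtain ⟨m, hm⟩ := Function.ne_iff.mp hμ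
  have hμμ : 0 < μ ⬝ᵥ μ :=
    Finset.sum_pos' (fun a _ => mul_self_nonneg _) ⟨m, Finset.mem_univ m, mul_self_pos.2 hm⟩
  have hV := memLp_augment hmeas.aestronglyMeasurable hmom
  have hcov := fromBlocks_apply_eq_covariance hV hμdef hSig hΨ3 hΨ4
  have hdiag (a : Fin d) : SigM a a = Var[fun ω => X ω a; P] :=
    (hcov (.inl a) (.inl a)).trans (covariance_self (hV (.inl a)).aemeasurable)
  have htr : 0 < SigM.trace :=
    Finset.sum_pos' (fun a _ => (variance_nonneg _ _).trans_eq (hdiag a).symm)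
      ⟨m, Finset.mem_univ m,
        (variance_pos_of_not_isCondTwoPoint (htp m) (hV (.inl m))).trans_eq (hdiag m).symm⟩
  have hY : MemLp (fun ω => Avv μ SigM ⬝ᵥ augment (X ω)) 2 P :=
    memLp_finsetSum Finset.univ fun i _ => (hV i).const_mul (Avv μ SigM i)
  have hQ : 0 < Avv μ SigM ⬝ᵥ fromBlocks SigM Ψ3ᵀ Ψ3 Ψ4 *ᵥ Avv μ SigM := by
    rw [dotProduct_mulVec_eq_variance hV hcov]
    simp only [Avv_dotProduct_augment] at hY ⊢
    exact variance_quadratic_pos_of_not_isCondTwoPoint (htp m) (inv_ne_zero hμμ.ne') _ hY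
  rw [sigma2VV, CVVof, Real.sq_sqrt (div_nonneg htr.le hμμ.le)]
  positivity

end
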